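/- Let $\sigma$ be smooth and odd with $\sigma(z) \sigma''(z) < 0$ for almost every $z \neq 0$ (sigmoidal shape, e.g. tanh). For $K > 0$ define $\chi_{\|}(K) = \frac{C_W}{2} \mathbb{E}[\partial_z^2(\sigma^2)(\sqrt{K} Z)]$ and $\chi_\perp(K) = C_W \mathbb{E}[\sigma'(\sqrt{K} Z)^2]$ with $Z \sim \mathcal{N}(0,1)$. Then $\chi_{\|}(K) = \chi_\perp(K) + C_W \mathbb{E}[\sigma(\sqrt{K}Z)\sigma''(\sqrt{K}Z)]$, and hence for $K > 0$ the conditions $\chi_{\|}(K) = 1$ and $\chi_\perp(K) = 1$ cannot both hold; criticality forces $K_* = 0$. -/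

import Mathlib

open MeasureTheory ProbabilityTheory

/-- `χ_∥(K) = (C_W/2) 𝔼[(σ²)''(√K Z)]`, `Z ∼ 𝒩(0,1)`. -/
noncomputable def chiPar (CW : ℝ) (σ : ℝ → ℝ) (K : ℝ) : ℝ :=
  CW / 2 * ∫ z, deriv (deriv (fun w => σ w ^ 2)) (Real.sqrt K * z) ∂ gaussianReal 0 1

/-- `χ_⊥(K) = C_W 𝔼[σ'(√K Z)²]`, `Z ∼ 𝒩(0,1)`. -/
noncomputable def chiPerp (CW : ℝ) (σ : ℝ → ℝ) (K : ℝ) : ℝ :=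
  CW * ∫ z, (deriv σ (Real.sqrt K * z)) ^ 2 ∂ gaussianReal 0 1

/-- for a smooth odd `σ` with `σ σ'' < 0` a.e., one has
`χ_∥(K) = χ_⊥(K) + C_W 𝔼[σ(√K Z) σ''(√K Z)]`, and for `K > 0` the conditions
`χ_∥(K) = 1` and `χ_⊥(K) = 1` cannot both hold. -/
theorem stmt11 (CW : ℝ) (hCW : 0 < CW) (σ : ℝ → ℝ) (hσ : ContDiff ℝ (⊤ : ℕ∞) σ)
    (hodd : ∀ z : ℝ, σ (-z) = -σ z)
    (hsign : ∀ᵐ z : ℝ, σ z * deriv (deriv σ) z < 0)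
    (hint : ∀ K : ℝ, 0 < K →
      Integrable (fun z => (deriv σ (Real.sqrt K * z)) ^ 2) (gaussianReal 0 1) ∧
      Integrable (fun z => σ (Real.sqrt K * z) * deriv (deriv σ) (Real.sqrt K * z))
        (gaussianReal 0 1)) :
    ∀ K : ℝ, 0 < K →
      (chiPar CW σ K = chiPerp CW σ K +
        CW * ∫ z, σ (Real.sqrt K * z) * deriv (deriv σ) (Real.sqrt K * z)
          ∂ gaussianReal 0 1) ∧
      ¬(chiPar CW σ K = 1 ∧ chiPerp CW σ K = 1) := by
  intro K hK
  have hsK : (0:ℝ) < Real.sqrt K := Real.sqrt_pos.mpr hK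
  have hdiff : Differentiable ℝ σ := hσ.differentiable (by simp)
  have hσ' : ContDiff ℝ (⊤:ℕ∞) (deriv σ) := (contDiff_infty_iff_deriv.mp (hσ.of_le (by simp))).2
  have hdiff' : Differentiable ℝ (deriv σ) := hσ'.differentiable (by simp)
  -- pointwise identity
  have key : ∀ w : ℝ, deriv (deriv (fun w => σ w ^ 2)) w
      = 2 * (deriv σ w ^ 2 + σ w * deriv (deriv σ) w) := by
    intro w
    have h1 : deriv (fun w => σ w ^ 2) = fun w => 2 * (σ w * deriv σ w) := by
      funext x
      have := ((hdiff x).hasDerivAt.pow 2)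
      simp only [pow_one, Nat.cast_ofNat] at this
      rw [show (fun w => σ w ^ 2) = σ ^ 2 from rfl, this.deriv, show (2:ℕ) - 1 = 1 from rfl]; ring
    rw [h1]
    have h2 : HasDerivAt (fun w => 2 * (σ w * deriv σ w))
        (2 * (deriv σ w * deriv σ w + σ w * deriv (deriv σ) w)) w :=
      (((hdiff w).hasDerivAt.mul (hdiff' w).hasDerivAt)).const_mul 2
    rw [h2.deriv]; ring
  obtain ⟨hi1, hi2⟩ := hint K hK
  set μ := gaussianReal 0 1
  have part1 : chiPar CW σ K = chiPerp CW σ K +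
      CW * ∫ z, σ (Real.sqrt K * z) * deriv (deriv σ) (Real.sqrt K * z) ∂ μ := by
    unfold chiPar chiPerp
    have : (∫ z, deriv (deriv (fun w => σ w ^ 2)) (Real.sqrt K * z) ∂ μ)
        = ∫ z, 2 * ((deriv σ (Real.sqrt K * z)) ^ 2
            + σ (Real.sqrt K * z) * deriv (deriv σ) (Real.sqrt K * z)) ∂ μ := by
      refine integral_congr_ae (Filter.Eventually.of_forall fun z => ?_)
      exact key _
    rw [this, integral_const_mul, integral_add hi1 hi2]
    ring
  refine ⟨part1, ?_⟩
  rintro ⟨hpar, hperp⟩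
  -- the correction term must vanish
  have hzero : (∫ z, σ (Real.sqrt K * z) * deriv (deriv σ) (Real.sqrt K * z) ∂ μ) = 0 := by
    have := part1
    rw [hpar, hperp] at this
    have h := this
    nlinarith [this]
  -- but it is strictly negative
  set f : ℝ → ℝ := fun z => σ (Real.sqrt K * z) * deriv (deriv σ) (Real.sqrt K * z) with hf
  have haef : ∀ᵐ z ∂ μ, f z < 0 := by
    have hac : μ ≪ (volume : Measure ℝ) :=
      gaussianReal_absolutelyContinuous 0 (by norm_num)
    have hvol : ∀ᵐ z : ℝ, f z < 0 := by
      rw [ae_iff] at hsign ⊢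
      have hpre : {z : ℝ | ¬ f z < 0}
          = (fun z => Real.sqrt K * z) ⁻¹' {z : ℝ | ¬ σ z * deriv (deriv σ) z < 0} := rfl
      rw [hpre, Real.volume_preimage_mul_left (ne_of_gt hsK), hsign, mul_zero]
    exact hac.ae_le hvol
  have hcont : Continuous f := by
    have h1 : Continuous fun z : ℝ => Real.sqrt K * z := by continuity
    have hσ2 : ContDiff ℝ (⊤:ℕ∞) (deriv (deriv σ)) :=
      (contDiff_infty_iff_deriv.mp hσ').2
    exact (hσ.continuous.comp h1).mul (hσ2.continuous.comp h1)
  have hneg : (∫ z, f z ∂ μ) < 0 := by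
    have hnn : 0 ≤ᵐ[μ] fun z => -f z :=
      haef.mono fun z hz => by simp; linarith
    have hipos : 0 < ∫ z, -f z ∂ μ := by
      rw [integral_pos_iff_support_of_nonneg_ae hnn hi2.neg]
      have hsub : {z : ℝ | f z < 0} ⊆ Function.support fun z => -f z := by
        intro z hz
        simp only [Function.mem_support, neg_ne_zero]
        exact ne_of_lt hz
      have hS : MeasurableSet {z : ℝ | f z < 0} :=
        (isOpen_lt hcont continuous_const).measurableSet
      have hfull : μ {z : ℝ | f z < 0} = 1 := by
        have hc : μ {z : ℝ | f z < 0}ᶜ = 0 := by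
          rw [ae_iff] at haef
          have : {z : ℝ | f z < 0}ᶜ = {z : ℝ | ¬ f z < 0} := by ext z; simp
          rw [this]; exact haef
        have := measure_add_measure_compl (μ := μ) hS
        rw [hc, add_zero] at this
        simpa using this
      calc (0:ENNReal) < 1 := by norm_num
        _ = μ {z : ℝ | f z < 0} := hfull.symm
        _ ≤ μ (Function.support fun z => -f z) := measure_mono hsub
    have : (∫ z, -f z ∂ μ) = - ∫ z, f z ∂ μ := integral_neg f
    linarith [this ▸ hipos]
  rw [hzero] at hneg
  exact lt_irrefl 0 hneg
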